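/- Let M be an admissible matroid on J of rank d + 1, S = S(M) the associated ranked symplectic matroid, and c a Minkowski weight of dimension d on the Bergman fan of S. If σ₁ = (F₁ ⊊ … ⊊ F_d) and σ₂ = (G₁ ⊊ … ⊊ G_d) are maximal chains of L(S) ∖ {∅, J} with F_d = G_d, then c(σ₁) = c(σ₂). -/

import Mathlib

open Set Matroid
open scoped Matroid

open scoped Classical

/-- The ground set `J = [n] ⊔ [n]*`: `Sum.inl` is `[n]`, `Sum.inr` is `[n]*`. -/
abbrev J (n : ℕ) := Fin n ⊕ Fin n

/-- The fixed-point-free involution `a ↦ a*` on `J n`. -/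
def sstar {n : ℕ} (a : J n) : J n := Sum.swap a

/-- `A* = {a* : a ∈ A}`. -/
def starSet {n : ℕ} (A : Set (J n)) : Set (J n) := sstar '' A

/-- `A` is admissible if `A ∩ A* = ∅`. -/
def Admissible {n : ℕ} (A : Set (J n)) : Prop := A ∩ starSet A = ∅

/-- `A` is totally inadmissible if `A* = A`. -/
def TotallyInadmissible {n : ℕ} (A : Set (J n)) : Prop := starSet A = A

/-- The rank of a set in a matroid (on a finite ground type). -/
noncomputable def Matroid.rSet {α : Type*} (M : Matroid α) (A : Set α) : ℕ :=
  sSup {k : ℕ | ∃ I, M.Indep I ∧ I ⊆ A ∧ I.ncard = k}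

/-- The rank of a matroid. -/
noncomputable def Matroid.rnk {α : Type*} (M : Matroid α) : ℕ := M.rSet M.E

/-- A loopless matroid: every singleton of the ground set is independent. -/
def Matroid.LooplessM {α : Type*} (M : Matroid α) : Prop := ∀ a ∈ M.E, M.Indep {a}

/-- `I^ad M`: the independent sets of `M` whose closure is admissible. -/
def Iad {n : ℕ} (M : Matroid (J n)) : Set (Set (J n)) :=
  {I | M.Indep I ∧ Admissible (M.closure I)}

/-- An admissible matroid on `J n`. -/
def IsAdmissibleMatroid {n : ℕ} (M : Matroid (J n)) : Prop :=
  M.E = Set.univ ∧ M.LooplessM ∧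
    ∀ A : Set (J n),
      M.rSet A = sSup {v : ℕ | ∃ I : Set (J n), M.Indep I ∧ Admissible I ∧ I ⊆ A ∧
        v = if ∃ a, a ∈ A ∧ sstar a ∈ A ∧ (I ∪ {a}) ∈ Iad M ∧ (I ∪ {sstar a}) ∈ Iad M
            then I.ncard + 2 else I.ncard}

/-- Strongly admissible sets with respect to `M`. -/
inductive StronglyAdmissible {n : ℕ} (M : Matroid (J n)) : Set (J n) → Prop
  | empty : StronglyAdmissible M ∅
  | insert {B : Set (J n)} {a : J n} : StronglyAdmissible M B →
      a ∉ M.closure B → sstar a ∉ M.closure B → StronglyAdmissible M (Insert.insert a B)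

/-- The Möbius function of a finite poset, valued in `ℤ`. -/
noncomputable def mob {α : Type*} [PartialOrder α] [Fintype α] (x y : α) : ℤ :=
  letI : DecidableEq α := Classical.decEq α
  letI : @DecidableRel α α (· < ·) := Classical.decRel _
  letI : @DecidableRel α α (· ≤ ·) := Classical.decRel _
  letI := Fintype.toLocallyFiniteOrder (α := α)
  IncidenceAlgebra.mu ℤ x y

/-- The lattice of flats of the ranked symplectic matroid associated to `M`:
admissible flats of `M` together with the ground set as top element. -/
abbrev LS {n : ℕ} (M : Matroid (J n)) :=
  {F : Set (J n) // (M.IsFlat F ∧ Admissible F) ∨ F = M.E}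

/-- The Möbius number `μ(S(M))` of the lattice of flats of the ranked symplectic matroid. -/
noncomputable def muS {n : ℕ} (M : Matroid (J n)) : ℤ :=
  if h : M.IsFlat ∅ ∧ Admissible (∅ : Set (J n)) then
    mob (⟨∅, Or.inl h⟩ : LS M) ⟨M.E, Or.inr rfl⟩
  else 0

/-- The Möbius function of the lattice of flats of `M`. -/
noncomputable def muFlats {n : ℕ} (M : Matroid (J n)) (F G : Set (J n)) : ℤ :=
  if h : M.IsFlat F ∧ M.IsFlat G then
    mob (⟨F, h.1⟩ : {X : Set (J n) // M.IsFlat X}) ⟨G, h.2⟩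
  else 0

/-- Matroid deletion. -/
def Matroid.del {α : Type*} (M : Matroid α) (D : Set α) : Matroid α := M ↾ (M.E \ D)

/-- Matroid contraction, via the dual. -/
def Matroid.con {α : Type*} (M : Matroid α) (C : Set α) : Matroid α := (M✶ ↾ (M✶.E \ C))✶

/-- A circuit: a minimal dependent subset of the ground set. -/
def Matroid.Circuit' {α : Type*} (M : Matroid α) (C : Set α) : Prop :=
  C ⊆ M.E ∧ ¬ M.Indep C ∧ ∀ D, D ⊂ C → M.Indep D

/-- Connectedness of a matroid: nonempty ground set and any two elements lie
in a common circuit. -/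
def Matroid.ConnectedM {α : Type*} (M : Matroid α) : Prop :=
  M.E.Nonempty ∧ ∀ a ∈ M.E, ∀ b ∈ M.E, a = b ∨ ∃ C, M.Circuit' C ∧ a ∈ C ∧ b ∈ C

/-- The 0/1-indicator vector of `B ⊆ J` in `ℝ^J`. -/
noncomputable def indic {n : ℕ} (B : Set (J n)) : J n → ℝ := fun a => if a ∈ B then 1 else 0

/-- The enveloping map `env : ℝ^J → ℝ^n`, `(env x)_i = x_i - x_{i*}`. -/
def envMap {n : ℕ} (x : J n → ℝ) : Fin n → ℝ := fun i => x (Sum.inl i) - x (Sum.inr i)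

/-- `e±_A ∈ ℝ^n`: `+1` on coordinates `i ∈ A`, `-1` on coordinates with `i* ∈ A`, `0` otherwise. -/
noncomputable def epm {n : ℕ} (A : Set (J n)) : Fin n → ℝ := envMap (indic A)

/-- The matroid polytope `P(S(M))` of the ranked symplectic matroid of `M`. -/
noncomputable def PolyS {n : ℕ} (M : Matroid (J n)) : Set (Fin n → ℝ) :=
  convexHull ℝ (epm '' {B | M.IsBase B ∧ Admissible B})

/-- The support of the Bergman fan of the ranked symplectic matroid of `M`. -/
def Berg {n : ℕ} (M : Matroid (J n)) : Set (Fin n → ℝ) :=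
  {ω | ∃ C : Finset (Set (J n)),
    (∀ F ∈ C, M.IsFlat F ∧ Admissible F ∧ F ≠ ∅) ∧
    (∀ F ∈ C, ∀ G ∈ C, F ⊆ G ∨ G ⊆ F) ∧
    ∃ a : Set (J n) → ℝ, (∀ F, 0 ≤ a F) ∧ ω = ∑ F ∈ C, a F • epm F}

/-- A maximal chain `F₁ ⊊ ⋯ ⊊ F_d` of proper flats of the lattice of flats of `S(M)`,
where `rank_M (F i) = i + 1`. -/
def IsFlagChain {n : ℕ} (M : Matroid (J n)) (d : ℕ) (F : Fin d → Set (J n)) : Prop :=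
  (∀ i, M.IsFlat (F i) ∧ Admissible (F i) ∧ M.rSet (F i) = (i : ℕ) + 1) ∧
    ∀ i j : Fin d, i < j → F i ⊂ F j

/-- A Minkowski weight of dimension `d` on the Bergman fan of `S(M)`. -/
def IsMinkowskiWeight {n : ℕ} (M : Matroid (J n)) (d : ℕ)
    (c : (Fin d → Set (J n)) → ℤ) : Prop :=
  ∀ (σ : Fin d → Set (J n)) (k : Fin d), IsFlagChain M d σ →
    (∑ G ∈ Finset.univ.filter
        (fun G : Set (J n) => IsFlagChain M d (Function.update σ k G)),
        (c (Function.update σ k G) : ℝ) • epm G)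
      ∈ Submodule.span ℝ {v : Fin n → ℝ | ∃ i : Fin d, i ≠ k ∧ v = epm (σ i)}

/-- The top (rank `d`) flat of a maximal chain. -/
def chainTop {n d : ℕ} (σ : Fin d → Set (J n)) : Set (J n) := ⋃ i, σ i

/-!
Fix a maximal chain `σ` and a position `k` below the top. The candidates `G` that can replace
`σ k` all contain the flat `P` under position `k` and pairwise meet exactly in `P`; they all lie
in the admissible flat `σ (k + 1)`. So for `a ∈ G \ P`, the signed `a`-coordinate of `e±_X` is `1`
for `X = G` and for the flats of `σ` above `k`, and `0` for the other candidates and for the flats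
of `σ` below `k`. Applied to the balancing condition at `(σ, k)`, this coordinate reads off the
weight of the chain through `G` on one side, and on the other a value independent of `G`. Hence
replacing a non-top flat does not change the weight.

Two chains with the same top are connected by such replacements. If they first differ at
position `k`, the join of their `k`-th flats has rank `k + 2` by submodularity. Continuing each of
the two `k`-th flats along one chain from that join up to the common top gives two chains that
differ only at `k`.
-/

open Function

namespace Matroid

variable {α : Type*} {M : Matroid α} {I X Y F G P : Set α}

lemma IsFlat.inter (hF : M.IsFlat F) (hG : M.IsFlat G) : M.IsFlat (F ∩ G) := by
  rw [inter_eq_iInter]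
  exact IsFlat.iInter (by rintro (_ | _) <;> assumption)

variable [Finite α]

lemma IsBasis'.rSet_eq_ncard (hI : M.IsBasis' I X) : M.rSet X = I.ncard := by
  have hle : ∀ k ∈ {k : ℕ | ∃ K, M.Indep K ∧ K ⊆ X ∧ K.ncard = k}, k ≤ I.ncard := by
    rintro k ⟨K, hK, hKX, rfl⟩
    have hKI := hK.encard_le_eRk_of_subset hKX
    rw [← hI.encard_eq_eRk, ← (toFinite K).cast_ncard_eq, ← (toFinite I).cast_ncard_eq] at hKI
    exact_mod_cast hKI
  exact le_antisymm (csSup_le ⟨_, ∅, M.empty_indep, empty_subset X, ncard_empty α⟩ hle)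
    (le_csSup ⟨_, hle⟩ ⟨I, hI.indep, hI.subset, rfl⟩)

lemma Indep.rSet_eq_ncard (hI : M.Indep I) : M.rSet I = I.ncard :=
  hI.isBasis_self.isBasis'.rSet_eq_ncard

lemma cast_rSet (M : Matroid α) (X : Set α) : (M.rSet X : ℕ∞) = M.eRk X := by
  obtain ⟨I, hI⟩ := M.exists_isBasis' X
  rw [hI.rSet_eq_ncard, (toFinite I).cast_ncard_eq, hI.encard_eq_eRk]

lemma rSet_mono (M : Matroid α) (h : X ⊆ Y) : M.rSet X ≤ M.rSet Y := by
  have := M.eRk_mono h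
  rwa [← cast_rSet, ← cast_rSet, Nat.cast_le] at this

lemma rSet_closure (M : Matroid α) (X : Set α) : M.rSet (M.closure X) = M.rSet X := by
  have := M.eRk_closure_eq X
  rwa [← cast_rSet, ← cast_rSet, Nat.cast_inj] at this

lemma rSet_loops (M : Matroid α) : M.rSet M.loops = 0 := by
  have : M.eRk M.loops = 0 := eRk_loops
  rwa [← cast_rSet, Nat.cast_eq_zero] at this

lemma rSet_inter_add_rSet_union_le (M : Matroid α) (X Y : Set α) :
    M.rSet (X ∩ Y) + M.rSet (X ∪ Y) ≤ M.rSet X + M.rSet Y := by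
  have := M.eRk_inter_add_eRk_union_le X Y
  rw [← cast_rSet, ← cast_rSet, ← cast_rSet, ← cast_rSet] at this
  exact_mod_cast this

lemma IsFlat.eq_of_subset_of_rSet_le (hF : M.IsFlat F) (hG : M.IsFlat G) (hFG : F ⊆ G)
    (h : M.rSet G ≤ M.rSet F) : F = G := by
  rw [← hF.closure, ← hG.closure]
  refine (M.isRkFinite_of_finite (toFinite F)).closure_eq_closure_of_subset_of_eRk_ge_eRk hFG ?_
  rw [← cast_rSet, ← cast_rSet]
  exact_mod_cast h

lemma IsFlat.inter_eq_of_rSet_eq_add_one (hP : M.IsFlat P) (hF : M.IsFlat F) (hG : M.IsFlat G)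
    (hPF : P ⊆ F) (hPG : P ⊆ G) (hrF : M.rSet F = M.rSet P + 1) (hrG : M.rSet G = M.rSet P + 1)
    (hFG : F ≠ G) : F ∩ G = P := by
  have hflat := hF.inter hG
  refine (hP.eq_of_subset_of_rSet_le hflat (subset_inter hPF hPG) ?_).symm
  by_contra! hlt
  have hFG' : F ∩ G = F := hflat.eq_of_subset_of_rSet_le hF inter_subset_left (by omega)
  exact hFG (hF.eq_of_subset_of_rSet_le hG (inter_eq_left.1 hFG') (by omega))

lemma IsFlat.exists_monotone_between (hX : M.IsFlat X) (hY : M.IsFlat Y) (hXY : X ⊆ Y) :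
    ∃ ρ : ℕ → Set α, Monotone ρ ∧ ∀ t, M.rSet X ≤ t → t ≤ M.rSet Y →
      M.IsFlat (ρ t) ∧ M.rSet (ρ t) = t ∧ X ⊆ ρ t ∧ ρ t ⊆ Y := by
  classical
  obtain ⟨I, hI⟩ := M.exists_isBasis' X
  obtain ⟨K, hK, hIK⟩ := hI.indep.subset_isBasis'_of_subset (hI.subset.trans hXY)
  -- Enumerate the basis `K` of `Y` so that the basis `I` of `X` comes first.
  obtain ⟨L, hL, rfl, hLI⟩ : ∃ L : List α, L.Nodup ∧ {a | a ∈ L} = K ∧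
      {a | a ∈ L.take I.ncard} = I := by
    set lI := (toFinite I).toFinset.toList
    have hlI : I.ncard = lI.length := by
      rw [Finset.length_toList, ncard_eq_toFinset_card I]
    refine ⟨lI ++ (toFinite (K \ I)).toFinset.toList, List.nodup_append.2 ⟨Finset.nodup_toList _,
      Finset.nodup_toList _, ?_⟩, ?_, ?_⟩
    · simp only [lI, Finset.mem_toList, Finite.mem_toFinset, mem_sdiff]
      rintro a ha _ ⟨-, hb⟩ rfl
      exact hb ha
    · ext a
      simpa [lI] using ⟨(·.elim (hIK ·) (·.1)), fun ha => (em (a ∈ I)).imp_right (⟨ha, ·⟩)⟩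
    · ext; simp [hlI, lI]
  have hcard : ∀ t, {a | a ∈ L.take t}.ncard = min t L.length := fun t => by
    rw [← List.coe_toFinset, ncard_coe_finset, List.toFinset_card_of_nodup
      (hL.sublist (List.take_sublist t L)), List.length_take]
  have hlen : L.length = M.rSet Y := by
    rw [hK.rSet_eq_ncard, ← List.coe_toFinset, ncard_coe_finset, List.toFinset_card_of_nodup hL]
  have htake : ∀ t, {a | a ∈ L.take t} ⊆ {a | a ∈ L} := fun t a ha => List.mem_of_mem_take ha
  refine ⟨fun t => M.closure {a | a ∈ L.take t},
    fun s t hst => M.closure_subset_closure fun a ha => List.take_subset_take_left L hst ha,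
    fun t hXt htY => ⟨M.isFlat_closure _, ?_, ?_, ?_⟩⟩
  · rw [rSet_closure, (hK.indep.subset (htake t)).rSet_eq_ncard, hcard]
    omega
  · rw [← hX.closure, ← hI.closure_eq_closure, ← hLI]
    refine M.closure_subset_closure fun a ha => List.take_subset_take_left L ?_ ha
    rwa [← hI.rSet_eq_ncard]
  · rw [← hY.closure, ← hK.closure_eq_closure]
    exact M.closure_subset_closure (htake t)

end Matroid

section Symplectic

variable {n : ℕ}

lemma admissible_iff {A : Set (J n)} : Admissible A ↔ ∀ a ∈ A, sstar a ∉ A := by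
  simp only [Admissible, starSet, eq_empty_iff_forall_notMem, mem_inter_iff, mem_image, not_and,
    not_exists]
  refine ⟨fun h a ha ha' => h _ ha' a ha rfl, fun h b hb a ha hab => ?_⟩
  subst hab
  exact h a ha hb

lemma Admissible.mono {A B : Set (J n)} (hAB : A ⊆ B) (hB : Admissible B) : Admissible A :=
  admissible_iff.2 fun a ha ha' => admissible_iff.1 hB a (hAB ha) (hAB ha')

noncomputable def signedCoord (a : J n) : (Fin n → ℝ) →ₗ[ℝ] ℝ :=
  Sum.elim (fun i => LinearMap.proj i) (fun i => -LinearMap.proj i) a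

lemma signedCoord_epm (a : J n) (A : Set (J n)) :
    signedCoord a (epm A) = indic A a - indic A (sstar a) := by
  cases a <;> simp [signedCoord, epm, envMap, sstar]

lemma signedCoord_epm_of_mem {A : Set (J n)} {a : J n} (hA : Admissible A) (ha : a ∈ A) :
    signedCoord a (epm A) = 1 := by
  simp [signedCoord_epm, indic, ha, admissible_iff.1 hA a ha]

lemma signedCoord_epm_of_notMem {A : Set (J n)} {a : J n} (ha : a ∉ A) (ha' : sstar a ∉ A) :
    signedCoord a (epm A) = 0 := by
  simp [signedCoord_epm, indic, ha, ha']

end Symplectic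

section FlagChain

variable {n d : ℕ} {M : Matroid (J n)} {σ : Fin d → Set (J n)} {k : Fin d} {G P : Set (J n)}

lemma IsFlagChain.monotone (hσ : IsFlagChain M d σ) : Monotone σ := by
  intro i j hij
  rcases hij.eq_or_lt with rfl | hlt
  exacts [subset_rfl, (hσ.2 i j hlt).subset]

lemma isFlagChain_of_monotone
    (hσ : ∀ i, M.IsFlat (σ i) ∧ Admissible (σ i) ∧ M.rSet (σ i) = (i : ℕ) + 1)
    (hmono : Monotone σ) : IsFlagChain M d σ := by
  refine ⟨hσ, fun i j hij => ssubset_of_subset_of_ne (hmono hij.le) fun he => hij.ne ?_⟩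
  have hr := congrArg M.rSet he
  rw [(hσ i).2.2, (hσ j).2.2] at hr
  exact Fin.ext (by omega)

lemma IsFlagChain.of_update (hG : IsFlagChain M d (update σ k G)) :
    M.IsFlat G ∧ Admissible G ∧ M.rSet G = (k : ℕ) + 1 := by
  simpa using hG.1 k

lemma IsFlagChain.update_subset (hG : IsFlagChain M d (update σ k G)) {i : Fin d} (hki : k < i) :
    G ⊆ σ i := by
  simpa [hki.ne'] using (hG.2 k i hki).subset

/-- In the paper's notation, position `k` of `σ` holds `F_{k+1}` and `P` is `F_k`, with the
loops playing the role of `F_0`. -/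
structure IsFlagFloor (M : Matroid (J n)) (σ : Fin d → Set (J n)) (k : Fin d) (P : Set (J n)) :
    Prop where
  isFlat : M.IsFlat P
  rSet_eq : M.rSet P = k
  subset_of_lt : ∀ i, i < k → σ i ⊆ P
  subset_of_eqOn : ∀ τ, IsFlagChain M d τ → (∀ i, i < k → τ i = σ i) → P ⊆ τ k

lemma IsFlagChain.exists_isFlagFloor (hσ : IsFlagChain M d σ) (k : Fin d) :
    ∃ P, IsFlagFloor M σ k P := by
  obtain ⟨_ | k, hk⟩ := k
  · exact ⟨M.loops, M.isFlat_closure ∅, M.rSet_loops,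
      fun i hi => (Nat.not_lt_zero _ (Fin.lt_def.1 hi)).elim,
      fun τ hτ _ => (hτ.1 _).1.loops_subset⟩
  · have hkk : (⟨k, by omega⟩ : Fin d) < ⟨k + 1, hk⟩ := Fin.mk_lt_mk.2 k.lt_succ_self
    refine ⟨σ ⟨k, by omega⟩, (hσ.1 _).1, (hσ.1 _).2.2, fun i hi => hσ.monotone ?_,
      fun τ hτ hτσ => hτσ _ hkk ▸ (hτ.2 _ _ hkk).subset⟩
    exact Fin.le_def.2 (Nat.le_of_lt_succ (Fin.lt_def.1 hi))

lemma IsFlagFloor.subset_update (hP : IsFlagFloor M σ k P)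
    (hG : IsFlagChain M d (update σ k G)) : P ⊆ G := by
  simpa using hP.subset_of_eqOn _ hG fun i hi => update_of_ne hi.ne _ _

end FlagChain

section Balancing

variable {n d : ℕ} {M : Matroid (J n)} {σ τ : Fin d → Set (J n)} {k : Fin d} {G P : Set (J n)}
  {a : J n}

lemma IsFlagFloor.ssubset (hP : IsFlagFloor M σ k P) (hG : IsFlagChain M d (update σ k G)) :
    P ⊂ G :=
  ssubset_of_subset_of_ne (hP.subset_update hG) fun h => by
    have := hG.of_update.2.2
    rw [← h, hP.rSet_eq] at this
    omega

lemma signedCoord_epm_flag (hσ : IsFlagChain M d σ) (hP : IsFlagFloor M σ k P)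
    (hG : IsFlagChain M d (update σ k G)) (haG : a ∈ G) (haP : a ∉ P) {i : Fin d} (hik : i ≠ k) :
    signedCoord a (epm (σ i)) = if k < i then 1 else 0 := by
  split_ifs with hki
  · exact signedCoord_epm_of_mem (hσ.1 i).2.1 (hG.update_subset hki haG)
  · have hσP : σ i ⊆ P := hP.subset_of_lt i (lt_of_le_of_ne (not_lt.1 hki) hik)
    refine signedCoord_epm_of_notMem (fun h => haP (hσP h)) fun h => ?_
    exact admissible_iff.1 hG.of_update.2.1 a haG (hP.subset_update hG (hσP h))

/-- Only the candidate `G` contains `a`: any other candidate meets `G` in `P`. And no candidate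
contains `a*`, since all of them lie in the admissible flat `σ (k + 1)`. -/
lemma signedCoord_balancingSum (c : (Fin d → Set (J n)) → ℤ) (hσ : IsFlagChain M d σ)
    (hk : (k : ℕ) + 1 < d) (hP : IsFlagFloor M σ k P) (hG : IsFlagChain M d (update σ k G))
    (haG : a ∈ G) (haP : a ∉ P) :
    signedCoord a (∑ G' ∈ Finset.univ.filter (fun G' => IsFlagChain M d (update σ k G')),
      (c (update σ k G') : ℝ) • epm G') = c (update σ k G) := by
  rw [map_sum, Finset.sum_eq_single G]
  · rw [map_smul, signedCoord_epm_of_mem hG.of_update.2.1 haG, smul_eq_mul, mul_one]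
  · intro G' hG' hne
    have hG' := (Finset.mem_filter.1 hG').2
    have hinter : G' ∩ G = P :=
      hP.isFlat.inter_eq_of_rSet_eq_add_one hG'.of_update.1 hG.of_update.1 (hP.subset_update hG')
        (hP.subset_update hG) (by rw [hG'.of_update.2.2, hP.rSet_eq])
        (by rw [hG.of_update.2.2, hP.rSet_eq]) hne
    have hkk : k < ⟨k + 1, hk⟩ := Fin.lt_def.2 (Nat.lt_succ_self k)
    refine (map_smul _ _ _).trans ?_
    rw [signedCoord_epm_of_notMem (fun h => haP (hinter ▸ ⟨h, haG⟩)) fun h => ?_, smul_zero]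
    exact admissible_iff.1 (hσ.1 _).2.1 a (hG.update_subset hkk haG) (hG'.update_subset hkk h)
  · exact fun hG' => (hG' (Finset.mem_filter.2 ⟨Finset.mem_univ G, hG⟩)).elim

theorem IsMinkowskiWeight.eq_of_eq_of_ne {c : (Fin d → Set (J n)) → ℤ}
    (hc : IsMinkowskiWeight M d c) (hσ : IsFlagChain M d σ) (hτ : IsFlagChain M d τ)
    (hk : (k : ℕ) + 1 < d) (hστ : ∀ i, i ≠ k → σ i = τ i) : c σ = c τ := by
  have hτσ : τ = update σ k (τ k) := by
    ext1 i
    rcases eq_or_ne i k with rfl | hi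
    · simp
    · simp [hi, hστ i hi]
  rw [hτσ] at hτ ⊢
  have hσσ : IsFlagChain M d (update σ k (σ k)) := by rwa [update_eq_self]
  obtain ⟨P, hP⟩ := hσ.exists_isFlagFloor k
  obtain ⟨a, haτ, haP⟩ := exists_of_ssubset (hP.ssubset hτ)
  obtain ⟨b, hbσ, hbP⟩ := exists_of_ssubset (hP.ssubset hσσ)
  -- Both functionals read `e±_{σ i}` as `[k < i]` for `i ≠ k`, so they agree on the span.
  have hab : EqOn (signedCoord b) (signedCoord a) {v | ∃ i, i ≠ k ∧ v = epm (σ i)} := by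
    rintro _ ⟨i, hi, rfl⟩
    rw [signedCoord_epm_flag hσ hP hσσ hbσ hbP hi, signedCoord_epm_flag hσ hP hτ haτ haP hi]
  have h := LinearMap.eqOn_span' hab (hc σ k hσ)
  rw [signedCoord_balancingSum c hσ hk hP hσσ hbσ hbP,
    signedCoord_balancingSum c hσ hk hP hτ haτ haP, update_eq_self] at h
  exact_mod_cast h

end Balancing

section Connectivity

variable {n d : ℕ} {M : Matroid (J n)} {σ τ : Fin d → Set (J n)} {k : Fin d}

lemma IsFlagChain.splice (hσ : IsFlagChain M d σ) {w : Set (J n)} (hσw : ∀ i, i < k → σ i ⊆ w)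
    (hw : M.IsFlat w ∧ Admissible w ∧ M.rSet w = (k : ℕ) + 1) {ρ : ℕ → Set (J n)}
    (hρ : Monotone ρ) (hρw : ∀ i : Fin d, k < i → M.IsFlat (ρ (i + 1)) ∧ Admissible (ρ (i + 1)) ∧
      M.rSet (ρ (i + 1)) = (i : ℕ) + 1 ∧ w ⊆ ρ (i + 1)) :
    IsFlagChain M d fun i => if i < k then σ i else if i = k then w else ρ (i + 1) := by
  refine isFlagChain_of_monotone (fun i => ?_) fun i j hij => ?_
  · split_ifs with hik hik'
    · exact hσ.1 i
    · exact hik' ▸ hw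
    · obtain ⟨hflat, hadm, hrank, -⟩ := hρw i (lt_of_le_of_ne (not_lt.1 hik) (Ne.symm hik'))
      exact ⟨hflat, hadm, hrank⟩
  · have hgt : ∀ i, ¬i < k → i ≠ k → k < i := fun i h₁ h₂ =>
      lt_of_le_of_ne (not_lt.1 h₁) (Ne.symm h₂)
    split_ifs with hi hj hjk hik hj hjk hj hjk
    · exact hσ.monotone hij
    · exact hσw i hi
    · exact (hσw i hi).trans (hρw j (hgt j hj hjk)).2.2.2
    · exact absurd (hik ▸ hij) (not_le.2 hj)
    · exact subset_rfl
    · exact (hρw j (hgt j hj hjk)).2.2.2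
    · exact absurd (hij.trans_lt hj) hi
    · exact absurd (hjk ▸ hij) (not_le.2 (hgt i hi hik))
    · exact hρ (Nat.succ_le_succ hij)

/-- By submodularity, since `σ k ∩ τ k` contains the rank-`k` floor. -/
lemma IsFlagChain.rSet_closure_union (hσ : IsFlagChain M d σ) (hτ : IsFlagChain M d τ)
    (hlow : ∀ i, i < k → τ i = σ i) (hne : σ k ≠ τ k) :
    M.rSet (M.closure (σ k ∪ τ k)) = k + 2 := by
  obtain ⟨P, hP⟩ := hσ.exists_isFlagFloor k
  obtain ⟨hxflat, -, hxrank⟩ := hσ.1 k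
  obtain ⟨hyflat, -, hyrank⟩ := hτ.1 k
  have hinter : (k : ℕ) ≤ M.rSet (σ k ∩ τ k) :=
    hP.rSet_eq ▸ M.rSet_mono
      (subset_inter (hP.subset_of_eqOn σ hσ fun _ _ => rfl) (hP.subset_of_eqOn τ hτ hlow))
  have hsub := M.rSet_inter_add_rSet_union_le (σ k) (τ k)
  have hzflat := M.isFlat_closure (σ k ∪ τ k)
  have hz : ∀ X, X ⊆ σ k ∪ τ k → M.IsFlat X → M.rSet X = k + 1 →
      M.rSet (M.closure (σ k ∪ τ k)) ≤ k + 1 → X = M.closure (σ k ∪ τ k) :=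
    fun X hX hXflat hXrank hle => hXflat.eq_of_subset_of_rSet_le hzflat
      (M.subset_closure_of_subset' hX hXflat.subset_ground) (hXrank ▸ hle)
  rw [rSet_closure] at hz ⊢
  by_contra h
  exact hne ((hz _ subset_union_left hxflat hxrank (by omega)).trans
    (hz _ subset_union_right hyflat hyrank (by omega)).symm)

lemma IsFlagChain.exists_bridge (hσ : IsFlagChain M d σ) (hτ : IsFlagChain M d τ)
    (hk : (k : ℕ) + 1 < d) (hlow : ∀ i, i < k → τ i = σ i)
    (htop : ∀ i : Fin d, (i : ℕ) + 1 = d → σ i = τ i) :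
    ∃ ω ω', IsFlagChain M d ω ∧ IsFlagChain M d ω' ∧
      (∀ i, i ≤ k ∨ (i : ℕ) + 1 = d → ω i = σ i) ∧
      (∀ i, i ≤ k ∨ (i : ℕ) + 1 = d → ω' i = τ i) ∧ ∀ i, i ≠ k → ω i = ω' i := by
  by_cases hne : σ k = τ k
  · refine ⟨σ, σ, hσ, hσ, fun _ _ => rfl, fun i hi => ?_, fun _ _ => rfl⟩
    rcases hi with hi | hi
    · rcases hi.lt_or_eq with hi | rfl
      exacts [(hlow i hi).symm, hne]
    · exact htop i hi
  obtain ⟨top, htopval⟩ : ∃ top : Fin d, (top : ℕ) = d - 1 := ⟨⟨d - 1, by omega⟩, rfl⟩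
  have hktop : k < top := Fin.lt_def.2 (by omega)
  have hτtop : τ top = σ top := (htop top (by omega)).symm
  obtain ⟨htopflat, htopadm, htoprank⟩ := hσ.1 top
  -- Above position `k`, both chains continue along a chain from the join of `σ k` and `τ k`
  -- up to the common top.
  have hzT : M.closure (σ k ∪ τ k) ⊆ σ top := by
    rw [← htopflat.closure]
    exact M.closure_subset_closure
      (union_subset (hσ.monotone hktop.le) (hτtop ▸ hτ.monotone hktop.le))
  obtain ⟨ρ, hρ, hρflat⟩ := (M.isFlat_closure _).exists_monotone_between htopflat hzT
  rw [hσ.rSet_closure_union hτ hlow hne, htoprank] at hρflat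
  have hρw : ∀ w ⊆ σ k ∪ τ k, ∀ i : Fin d, k < i → M.IsFlat (ρ (i + 1)) ∧
      Admissible (ρ (i + 1)) ∧ M.rSet (ρ (i + 1)) = (i : ℕ) + 1 ∧ w ⊆ ρ (i + 1) := by
    intro w hw i hi
    obtain ⟨hflat, hrank, hzρ, hρT⟩ := hρflat (i + 1) (by have := Fin.lt_def.1 hi; omega)
      (by omega)
    exact ⟨hflat, htopadm.mono hρT, hrank, hw.trans
      ((M.subset_closure _ (union_subset (hσ.1 k).1.subset_ground (hτ.1 k).1.subset_ground)).trans
        hzρ)⟩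
  have hρtop : ρ (top + 1) = σ top := by
    obtain ⟨hflat, hrank, -, hρT⟩ := hρflat (top + 1) (by omega) (by omega)
    exact hflat.eq_of_subset_of_rSet_le htopflat hρT (by rw [hrank, htoprank])
  have hagree : ∀ (υ : Fin d → Set (J n)) w, υ k = w → (∀ i, i < k → υ i = σ i) →
      υ top = σ top → ∀ i, i ≤ k ∨ (i : ℕ) + 1 = d →
        (if i < k then σ i else if i = k then w else ρ (i + 1)) = υ i := by
    intro υ w hw hυσ hυtop i hi
    rcases hi with hi | hi
    · rcases hi.lt_or_eq with hi | rfl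
      · simp [hi, hυσ i hi]
      · simp [hw]
    · obtain rfl : i = top := Fin.ext (by omega)
      simp [hktop.not_gt, hktop.ne', hρtop, hυtop]
  refine ⟨_, _, hσ.splice (fun i hi => hσ.monotone hi.le) (hσ.1 k) hρ (hρw _ subset_union_left),
    hσ.splice (fun i hi => hlow i hi ▸ hτ.monotone hi.le) (hτ.1 k) hρ (hρw _ subset_union_right),
    hagree σ _ rfl (fun _ _ => rfl) rfl, hagree τ _ rfl hlow hτtop, fun i hi => by simp [hi]⟩

theorem IsMinkowskiWeight.eq_of_eq_of_add_lt {c : (Fin d → Set (J n)) → ℤ}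
    (hc : IsMinkowskiWeight M d c) (m : ℕ) (hσ : IsFlagChain M d σ) (hτ : IsFlagChain M d τ)
    (hστ : ∀ i : Fin d, (i : ℕ) + m + 1 < d ∨ (i : ℕ) + 1 = d → σ i = τ i) : c σ = c τ := by
  induction m generalizing σ τ with
  | zero => exact congrArg c (funext fun i => hστ i (by omega))
  | succ m ih =>
    by_cases hmd : d < m + 2
    · exact ih hσ hτ fun i hi => hστ i (by omega)
    obtain ⟨k, hk⟩ : ∃ k : Fin d, (k : ℕ) = d - m - 2 := ⟨⟨d - m - 2, by omega⟩, rfl⟩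
    obtain ⟨ω, ω', hω, hω', hωσ, hω'τ, hωω'⟩ := hσ.exists_bridge (k := k) hτ (by omega)
      (fun i hi => (hστ i (by have := Fin.lt_def.1 hi; omega)).symm) fun i hi => hστ i (.inr hi)
    calc c σ = c ω := (ih hσ hω fun i hi => (hωσ i (by rw [Fin.le_def]; omega)).symm)
      _ = c ω' := hc.eq_of_eq_of_ne hω hω' (by omega) hωω'
      _ = c τ := ih hω' hτ fun i hi => hω'τ i (by rw [Fin.le_def]; omega)

end Connectivity

theorem stmt_15_general (n : ℕ) (M : Matroid (J n))
    (d : ℕ) (c : (Fin d → Set (J n)) → ℤ)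
    (hc : IsMinkowskiWeight M d c)
    (σ₁ σ₂ : Fin d → Set (J n)) (h₁ : IsFlagChain M d σ₁) (h₂ : IsFlagChain M d σ₂)
    (hlast : ∀ i : Fin d, (i : ℕ) + 1 = d → σ₁ i = σ₂ i) :
    c σ₁ = c σ₂ :=
  hc.eq_of_eq_of_add_lt d h₁ h₂ fun i hi => hlast i (by omega)

theorem stmt_15 (n : ℕ) (hn : 1 ≤ n) (M : Matroid (J n)) (hM : IsAdmissibleMatroid M)
    (d : ℕ) (hrk : M.rnk = d + 1) (c : (Fin d → Set (J n)) → ℤ)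
    (hc : IsMinkowskiWeight M d c)
    (σ₁ σ₂ : Fin d → Set (J n)) (h₁ : IsFlagChain M d σ₁) (h₂ : IsFlagChain M d σ₂)
    (hlast : ∀ i : Fin d, (i : ℕ) + 1 = d → σ₁ i = σ₂ i) :
    c σ₁ = c σ₂ :=
  stmt_15_general n M d c hc σ₁ σ₂ h₁ h₂ hlast
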